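/- Let Φ be a 3CNF formula and let (D(Φ),W(Φ)) be the NU default theory described in the context. For every S ⊆ W(Φ), there exists an extension E* of (D(Φ),W(Φ)_S) such that: for each xᵢ ∈ S, ¬xᵢ ∈ E* and yᵢ ∈ E*; and for each xᵢ ∈ W(Φ) \ S, xᵢ ∈ E* and ¬yᵢ ∈ E*. -/

import Mathlib

/-! Propositional formulas -/

inductive Form (V : Type) : Type
  | atom : V → Form V
  | tru  : Form V
  | fals : Form V
  | neg  : Form V → Form V
  | conj : Form V → Form V → Form V
  | disj : Form V → Form V → Form V

/-- Satisfaction of a formula by a valuation. -/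
def Form.sat {V : Type} (v : V → Prop) : Form V → Prop
  | .atom a => v a
  | .tru => True
  | .fals => False
  | .neg φ => ¬ Form.sat v φ
  | .conj φ ψ => Form.sat v φ ∧ Form.sat v ψ
  | .disj φ ψ => Form.sat v φ ∨ Form.sat v ψ

/-- Logical logClosure `T*` of a set of formulas. -/
def logClosure {V : Type} (T : Set (Form V)) : Set (Form V) :=
  { φ | ∀ v : V → Prop, (∀ ψ ∈ T, Form.sat v ψ) → Form.sat v φ }

/-- A default rule `α : β₁,…,β_m / γ` (`pre = none` means the prerequisite is missing). -/
structure Default (V : Type) : Type where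
  pre   : Option (Form V)
  justs : List (Form V)
  concl : Form V

/-- The stage sets `E_i` relative to a candidate extension `E`:
`E_0 = W`, `E_{i+1} = E_i* ∪ {γ | α:β₁,…,β_m/γ ∈ D, α ∈ E_i, ¬β₁ ∉ E, …, ¬β_m ∉ E}`. -/
def extStage {V : Type} (D : Set (Default V)) (W : Set (Form V)) (E : Set (Form V)) :
    ℕ → Set (Form V)
  | 0 => W
  | i + 1 =>
      logClosure (extStage D W E i) ∪
        { φ | ∃ d ∈ D, d.concl = φ ∧ (∀ a ∈ d.pre, a ∈ extStage D W E i) ∧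
              ∀ b ∈ d.justs, Form.neg b ∉ E }

/-- `E` is an extension of the default theory `(D, W)`. -/
def IsExtension {V : Type} (D : Set (Default V)) (W : Set (Form V)) (E : Set (Form V)) : Prop :=
  E = ⋃ i, extStage D W E i

/-- `(D, W) ⊨ φ`: every extension of `(D, W)` contains `φ`. -/
def entails {V : Type} (D : Set (Default V)) (W : Set (Form V)) (φ : Form V) : Prop :=
  ∀ E, IsExtension D W E → φ ∈ E

/-! Literals -/

/-- A literal: a letter together with a sign (`pos = true` means a positive literal). -/
structure Lit (V : Type) : Type where
  letter : V
  pos : Bool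

/-- The formula corresponding to a literal. -/
def Lit.toForm {V : Type} (l : Lit V) : Form V :=
  if l.pos then Form.atom l.letter else Form.neg (Form.atom l.letter)

/-- Negation of a literal (so that `¬¬a = a`). -/
def Lit.negate {V : Type} (l : Lit V) : Lit V := ⟨l.letter, !l.pos⟩

/-- A set of literals is consistent if it contains no complementary pair. -/
def LitConsistent {V : Type} (S : Set (Lit V)) : Prop := ∀ l ∈ S, l.negate ∉ S

/-! Normal mixed unary (NMU) default theories -/

/-- An NMU default `α : β / β` with `α` empty or a single literal and `β` a single literal. -/
structure NMUDefault (V : Type) : Type where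
  pre : Option (Lit V)
  concl : Lit V

/-- The general default rule corresponding to an NMU default. -/
def NMUDefault.toDefault {V : Type} (d : NMUDefault V) : Default V :=
  ⟨d.pre.map Lit.toForm, [d.concl.toForm], d.concl.toForm⟩

/-- `E` is an extension of the NMU theory `(D, W)`. -/
def NMU.IsExtension {V : Type} (D : Set (NMUDefault V)) (W : Set (Lit V))
    (E : Set (Form V)) : Prop :=
  _root_.IsExtension (NMUDefault.toDefault '' D) (Lit.toForm '' W) E

/-- The NMU theory `(D, W)` entails the literal `l`. -/
def NMU.entails {V : Type} (D : Set (NMUDefault V)) (W : Set (Lit V)) (l : Lit V) : Prop :=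
  _root_.entails (NMUDefault.toDefault '' D) (Lit.toForm '' W) l.toForm

/-- An NMU theory is normal unary (NU) if every nonempty prerequisite is positive. -/
def IsNU {V : Type} (D : Set (NMUDefault V)) : Prop :=
  ∀ d ∈ D, ∀ p ∈ d.pre, p.pos = true

/-! Atomic dependency graph -/

/-- Edge `(x, y)` of the atomic dependency graph: `x` occurs in the prerequisite and `y`
in the consequent of some default of `D`. -/
def depEdge {V : Type} (D : Set (NMUDefault V)) (x y : V) : Prop :=
  ∃ d ∈ D, (∃ p ∈ d.pre, p.letter = x) ∧ d.concl.letter = y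

/-- There is a path from `x` to `y` in the atomic dependency graph. -/
def depReach {V : Type} (D : Set (NMUDefault V)) : V → V → Prop :=
  Relation.ReflTransGen (depEdge D)

/-- A set of literals `S` influences a literal `l`. -/
def influences {V : Type} (D : Set (NMUDefault V)) (S : Set (Lit V)) (l : Lit V) : Prop :=
  ∃ t ∈ S, depReach D t.letter l.letter

/-- A 3CNF formula over variables `Fin n` with `m` conjuncts is represented by the
function giving the `k`-th literal of the `j`-th clause. -/
def Sat3 {n m : ℕ} (Φ : Fin m → Fin 3 → Lit (Fin n)) : Prop :=
  ∃ τ : Fin n → Bool, ∀ j : Fin m, ∃ k : Fin 3, τ (Φ j k).letter = (Φ j k).pos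

/-- The letters of the theory associated with a 3CNF `Φ`: the variables `xᵢ`,
the fresh letters `yᵢ` and the fresh letters `c_j`. -/
inductive PhiVar (n m : ℕ) : Type
  | X : Fin n → PhiVar n m
  | Y : Fin n → PhiVar n m
  | C : Fin m → PhiVar n m

/-- `σ(xᵢ) = xᵢ` and `σ(¬xᵢ) = yᵢ`. -/
def sigmaMap {n m : ℕ} (t : Lit (Fin n)) : Lit (PhiVar n m) :=
  if t.pos then ⟨PhiVar.X t.letter, true⟩ else ⟨PhiVar.Y t.letter, true⟩

/-- The defaults `D(Φ) = D₁ ∪ D₂ ∪ D₃`, where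
`D₁ = {xᵢ:¬yᵢ/¬yᵢ, :yᵢ/yᵢ}`, `D₂ = {σ(t_{j,k}):¬c_j/¬c_j}` and `D₃ = {:¬xᵢ/¬xᵢ}`. -/
def DPhi {n m : ℕ} (Φ : Fin m → Fin 3 → Lit (Fin n)) : Set (NMUDefault (PhiVar n m)) :=
  { d | (∃ i, d = ⟨some ⟨PhiVar.X i, true⟩, ⟨PhiVar.Y i, false⟩⟩) ∨
        (∃ i, d = ⟨none, ⟨PhiVar.Y i, true⟩⟩) ∨
        (∃ j k, d = ⟨some (sigmaMap (Φ j k)), ⟨PhiVar.C j, false⟩⟩) ∨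
        (∃ i, d = ⟨none, ⟨PhiVar.X i, false⟩⟩) }

/-- `W(Φ) = {x₁, …, xₙ}`. -/
def WPhi (n m : ℕ) : Set (Lit (PhiVar n m)) := { l | ∃ i, l = ⟨PhiVar.X i, true⟩ }


/-! The extension is the closure of the literals that agree with the assignment `xᵢ := (xᵢ ∉ S)`
(with `yᵢ` read as `¬xᵢ` and every `c_j` false), over all `xᵢ`, `yᵢ` and over those `c_j` whose
clause the assignment satisfies. A default applicable with respect to this set can only conclude
one of these literals, and each of them is derived within two stages: `xᵢ` from `W`, `¬xᵢ` and
`yᵢ` by `D₃` and `D₁`, `¬yᵢ` from `xᵢ` by `D₁`, and `¬c_j` from a true `σ(t_{j,k})` by `D₂`. -/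

section DefaultLogic

variable {V : Type}

theorem subset_logClosure (T : Set (Form V)) : T ⊆ logClosure T :=
  fun _ hφ _ hv => hv _ hφ

theorem logClosure_mono {T T' : Set (Form V)} (h : T ⊆ T') : logClosure T ⊆ logClosure T' :=
  fun _ hφ v hv => hφ v fun ψ hψ => hv ψ (h hψ)

theorem logClosure_logClosure_subset (T : Set (Form V)) :
    logClosure (logClosure T) ⊆ logClosure T :=
  fun _ hφ v hv => hφ v fun _ hψ => hψ v hv

theorem Form.sat_of_mem_logClosure {T : Set (Form V)} {φ : Form V} {v : V → Prop}
    (hv : ∀ ψ ∈ T, ψ.sat v) (hφ : φ ∈ logClosure T) : φ.sat v :=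
  hφ v hv

theorem extStage_mono (D : Set (Default V)) (W E : Set (Form V)) :
    Monotone (extStage D W E) :=
  monotone_nat_of_le_succ fun _ _ hφ => Or.inl (subset_logClosure _ hφ)

theorem isExtension_logClosure {D : Set (Default V)} {W B : Set (Form V)}
    (hW : W ⊆ logClosure B)
    (hclosed : ∀ d ∈ D, (∀ a ∈ d.pre, a ∈ logClosure B) →
      (∀ b ∈ d.justs, Form.neg b ∉ logClosure B) → d.concl ∈ logClosure B)
    {k : ℕ} (hB : B ⊆ extStage D W (logClosure B) k) :
    IsExtension D W (logClosure B) := by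
  have hstage : ∀ i, extStage D W (logClosure B) i ⊆ logClosure B := by
    intro i
    induction i with
    | zero => exact hW
    | succ i ih =>
      rintro φ (hφ | ⟨d, hd, rfl, hpre, hjust⟩)
      · exact logClosure_logClosure_subset B (logClosure_mono ih hφ)
      · exact hclosed d hd (fun a ha => ih (hpre a ha)) hjust
  refine (Set.iUnion_subset hstage).antisymm' fun φ hφ => ?_
  exact Set.mem_iUnion.2 ⟨k + 1, Or.inl (logClosure_mono hB hφ)⟩

theorem NMUDefault.concl_mem_extStage_succ {D : Set (NMUDefault V)} {W E : Set (Form V)}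
    {i : ℕ} {d : NMUDefault V} (hd : d ∈ D)
    (hpre : ∀ p ∈ d.pre, p.toForm ∈ extStage (NMUDefault.toDefault '' D) W E i)
    (hjust : Form.neg d.concl.toForm ∉ E) :
    d.concl.toForm ∈ extStage (NMUDefault.toDefault '' D) W E (i + 1) :=
  Or.inr ⟨d.toDefault, ⟨d, hd, rfl⟩, rfl, by simpa [NMUDefault.toDefault] using hpre,
    by simpa [NMUDefault.toDefault] using hjust⟩

theorem Lit.sat_toForm_iff (v : V → Prop) (l : Lit V) :
    l.toForm.sat v ↔ (v l.letter ↔ l.pos = true) := by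
  rcases l with ⟨a, _ | _⟩ <;> simp [Lit.toForm, Form.sat]

def literalDiagram (v : V → Bool) (G : Set V) : Set (Form V) :=
  (fun a => (⟨a, v a⟩ : Lit V).toForm) '' G

section LiteralDiagram

variable {v : V → Bool} {G : Set V}

theorem sat_of_mem_literalDiagram : ∀ ψ ∈ literalDiagram v G, ψ.sat (v · = true) := by
  rintro _ ⟨a, -, rfl⟩
  simp [Lit.sat_toForm_iff]

theorem Lit.eq_pos_of_toForm_mem {l : Lit V} (hl : l.toForm ∈ logClosure (literalDiagram v G)) :
    v l.letter = l.pos := by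
  have := (Lit.sat_toForm_iff _ l).1 (Form.sat_of_mem_logClosure sat_of_mem_literalDiagram hl)
  rcases l with ⟨a, _ | _⟩ <;> simpa using this

theorem Lit.toForm_mem_logClosure {l : Lit V} (hG : l.letter ∈ G) (hv : v l.letter = l.pos) :
    l.toForm ∈ logClosure (literalDiagram v G) := by
  rcases l with ⟨a, pos⟩
  dsimp only at hG hv
  subst hv
  exact subset_logClosure _ ⟨a, hG, rfl⟩

theorem Lit.neg_toForm_not_mem {l : Lit V} (hv : v l.letter = l.pos) :
    Form.neg l.toForm ∉ logClosure (literalDiagram v G) := fun h => by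
  have := Form.sat_of_mem_logClosure sat_of_mem_literalDiagram h
  simp [Form.sat, Lit.sat_toForm_iff, hv] at this

theorem Lit.toForm_mem_of_neg_not_mem {l : Lit V} (hG : l.letter ∈ G)
    (hl : Form.neg l.toForm ∉ logClosure (literalDiagram v G)) :
    l.toForm ∈ logClosure (literalDiagram v G) := by
  refine Lit.toForm_mem_logClosure hG ?_
  by_contra hne
  refine hl fun w hw => ?_
  have hdiag := (Lit.sat_toForm_iff w ⟨l.letter, v l.letter⟩).1 (hw _ ⟨_, hG, rfl⟩)
  simp only [Form.sat, Lit.sat_toForm_iff]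
  cases h : v l.letter <;> cases hp : l.pos <;> simp_all

end LiteralDiagram

end DefaultLogic

section ThreeCNF

variable {n m : ℕ} (Φ : Fin m → Fin 3 → Lit (Fin n)) (S : Set (Lit (PhiVar n m)))

theorem sigmaMap_pos (t : Lit (Fin n)) : (sigmaMap t : Lit (PhiVar n m)).pos = true := by
  unfold sigmaMap
  split <;> rfl

open Classical in
noncomputable def phiVal : PhiVar n m → Bool
  | .X i => decide ((⟨PhiVar.X i, true⟩ : Lit (PhiVar n m)) ∉ S)
  | .Y i => decide ((⟨PhiVar.X i, true⟩ : Lit (PhiVar n m)) ∈ S)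
  | .C _ => false

def decidedLetters : Set (PhiVar n m)
  | .C j => ∃ k, phiVal S (sigmaMap (Φ j k)).letter = true
  | _ => True

noncomputable def phiExtension : Set (Form (PhiVar n m)) :=
  logClosure (literalDiagram (phiVal S) (decidedLetters Φ S))

variable {Φ S}

theorem concl_letter_mem_decidedLetters {d : NMUDefault (PhiVar n m)} (hd : d ∈ DPhi Φ)
    (hpre : ∀ p ∈ d.pre, p.toForm ∈ phiExtension Φ S) :
    d.concl.letter ∈ decidedLetters Φ S := by
  rcases hd with ⟨i, rfl⟩ | ⟨i, rfl⟩ | ⟨j, k, rfl⟩ | ⟨i, rfl⟩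
  · trivial
  · trivial
  · refine ⟨k, ?_⟩
    rw [Lit.eq_pos_of_toForm_mem (hpre _ rfl), sigmaMap_pos]
  · trivial

theorem phiExtension_closed : ∀ d ∈ NMUDefault.toDefault '' DPhi Φ,
    (∀ a ∈ d.pre, a ∈ phiExtension Φ S) →
    (∀ b ∈ d.justs, Form.neg b ∉ phiExtension Φ S) → d.concl ∈ phiExtension Φ S := by
  rintro _ ⟨d, hd, rfl⟩ hpre hjust
  have hG := concl_letter_mem_decidedLetters hd fun p hp => hpre _ (Option.mem_map_of_mem _ hp)
  exact Lit.toForm_mem_of_neg_not_mem hG (hjust _ (List.mem_singleton_self _))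

variable (Φ S)

abbrev phiStage : ℕ → Set (Form (PhiVar n m)) :=
  extStage (NMUDefault.toDefault '' DPhi Φ) (Lit.toForm '' (WPhi n m \ S)) (phiExtension Φ S)

theorem phiVal_X_eq_true_iff (i : Fin n) :
    phiVal S (PhiVar.X i) = true ↔ (⟨PhiVar.X i, true⟩ : Lit (PhiVar n m)) ∉ S := by
  simp [phiVal]

theorem phiVal_Y_eq_true_iff (i : Fin n) :
    phiVal S (PhiVar.Y i) = true ↔ (⟨PhiVar.X i, true⟩ : Lit (PhiVar n m)) ∈ S := by
  simp [phiVal]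

theorem X_mem_phiStage_zero {i : Fin n} (hi : (⟨PhiVar.X i, true⟩ : Lit (PhiVar n m)) ∉ S) :
    Form.atom (PhiVar.X i) ∈ phiStage Φ S 0 :=
  ⟨_, ⟨⟨i, rfl⟩, hi⟩, rfl⟩

theorem diagram_X_mem_phiStage_one (i : Fin n) :
    (⟨PhiVar.X i, phiVal S (PhiVar.X i)⟩ : Lit (PhiVar n m)).toForm ∈ phiStage Φ S 1 := by
  cases hv : phiVal S (PhiVar.X i)
  · exact NMUDefault.concl_mem_extStage_succ
      (d := (⟨none, ⟨.X i, false⟩⟩ : NMUDefault (PhiVar n m)))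
      (Or.inr (Or.inr (Or.inr ⟨i, rfl⟩)))
      (by simp) (Lit.neg_toForm_not_mem hv)
  · exact extStage_mono _ _ _ zero_le_one
      (X_mem_phiStage_zero Φ S ((phiVal_X_eq_true_iff S i).1 hv))

theorem diagram_Y_mem_phiStage_one (i : Fin n) :
    (⟨PhiVar.Y i, phiVal S (PhiVar.Y i)⟩ : Lit (PhiVar n m)).toForm ∈ phiStage Φ S 1 := by
  cases hv : phiVal S (PhiVar.Y i)
  · have hi : (⟨PhiVar.X i, true⟩ : Lit (PhiVar n m)) ∉ S :=
      mt (phiVal_Y_eq_true_iff S i).2 (by simp [hv])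
    exact NMUDefault.concl_mem_extStage_succ
      (d := (⟨some ⟨.X i, true⟩, ⟨.Y i, false⟩⟩ : NMUDefault (PhiVar n m)))
      (Or.inl ⟨i, rfl⟩)
      (by rintro p ⟨⟩; exact X_mem_phiStage_zero Φ S hi) (Lit.neg_toForm_not_mem hv)
  · exact NMUDefault.concl_mem_extStage_succ
      (d := (⟨none, ⟨.Y i, true⟩⟩ : NMUDefault (PhiVar n m)))
      (Or.inr (Or.inl ⟨i, rfl⟩))
      (by simp) (Lit.neg_toForm_not_mem hv)

theorem sigmaMap_mem_phiStage_one {t : Lit (Fin n)}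
    (ht : phiVal S (sigmaMap t : Lit (PhiVar n m)).letter = true) :
    (sigmaMap t : Lit (PhiVar n m)).toForm ∈ phiStage Φ S 1 := by
  cases hp : t.pos <;> simp only [sigmaMap, hp, Bool.false_eq_true, ↓reduceIte] at ht ⊢
  · simpa only [ht] using diagram_Y_mem_phiStage_one Φ S t.letter
  · simpa only [ht] using diagram_X_mem_phiStage_one Φ S t.letter

theorem literalDiagram_subset_phiStage_two :
    literalDiagram (phiVal S) (decidedLetters Φ S) ⊆ phiStage Φ S 2 := by
  rintro _ ⟨a, ha, rfl⟩
  cases a with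
  | X i => exact extStage_mono _ _ _ one_le_two (diagram_X_mem_phiStage_one Φ S i)
  | Y i => exact extStage_mono _ _ _ one_le_two (diagram_Y_mem_phiStage_one Φ S i)
  | C j =>
    obtain ⟨k, hk⟩ := ha
    exact NMUDefault.concl_mem_extStage_succ
      (d := (⟨some (sigmaMap (Φ j k)), ⟨.C j, false⟩⟩ : NMUDefault (PhiVar n m)))
      (Or.inr (Or.inr (Or.inl ⟨j, k, rfl⟩)))
      (by simpa using sigmaMap_mem_phiStage_one Φ S hk) (Lit.neg_toForm_not_mem rfl)

theorem isExtension_phiExtension :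
    NMU.IsExtension (DPhi Φ) (WPhi n m \ S) (phiExtension Φ S) := by
  refine isExtension_logClosure ?_ phiExtension_closed (literalDiagram_subset_phiStage_two Φ S)
  rintro _ ⟨_, ⟨⟨i, rfl⟩, hi⟩, rfl⟩
  exact Lit.toForm_mem_logClosure trivial ((phiVal_X_eq_true_iff S i).2 hi)

end ThreeCNF

theorem exists_extension_claim_general {n m : ℕ} (Φ : Fin m → Fin 3 → Lit (Fin n))
    (S : Set (Lit (PhiVar n m))) :
    ∃ E : Set (Form (PhiVar n m)), NMU.IsExtension (DPhi Φ) (WPhi n m \ S) E ∧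
      (∀ i : Fin n, (⟨PhiVar.X i, true⟩ : Lit (PhiVar n m)) ∈ S →
        Lit.toForm (⟨PhiVar.X i, false⟩ : Lit (PhiVar n m)) ∈ E ∧
        Lit.toForm (⟨PhiVar.Y i, true⟩ : Lit (PhiVar n m)) ∈ E) ∧
      (∀ i : Fin n, (⟨PhiVar.X i, true⟩ : Lit (PhiVar n m)) ∉ S →
        Lit.toForm (⟨PhiVar.X i, true⟩ : Lit (PhiVar n m)) ∈ E ∧
        Lit.toForm (⟨PhiVar.Y i, false⟩ : Lit (PhiVar n m)) ∈ E) := by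
  refine ⟨phiExtension Φ S, isExtension_phiExtension Φ S,
    fun i hi => ⟨?_, ?_⟩, fun i hi => ⟨?_, ?_⟩⟩ <;>
  exact Lit.toForm_mem_logClosure trivial (by simp [phiVal, hi])

/-- For every `S ⊆ W(Φ)`, there exists an extension `E*` of `(D(Φ), W(Φ)_S)` such that:
for each `xᵢ ∈ S`, `¬xᵢ ∈ E*` and `yᵢ ∈ E*`; and for each `xᵢ ∉ S`, `xᵢ ∈ E*` and
`¬yᵢ ∈ E*`. -/
theorem exists_extension_claim {n m : ℕ} (Φ : Fin m → Fin 3 → Lit (Fin n))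
    (S : Set (Lit (PhiVar n m))) (hS : S ⊆ WPhi n m) :
    ∃ E : Set (Form (PhiVar n m)), NMU.IsExtension (DPhi Φ) (WPhi n m \ S) E ∧
      (∀ i : Fin n, (⟨PhiVar.X i, true⟩ : Lit (PhiVar n m)) ∈ S →
        Lit.toForm (⟨PhiVar.X i, false⟩ : Lit (PhiVar n m)) ∈ E ∧
        Lit.toForm (⟨PhiVar.Y i, true⟩ : Lit (PhiVar n m)) ∈ E) ∧
      (∀ i : Fin n, (⟨PhiVar.X i, true⟩ : Lit (PhiVar n m)) ∉ S →
        Lit.toForm (⟨PhiVar.X i, true⟩ : Lit (PhiVar n m)) ∈ E ∧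
        Lit.toForm (⟨PhiVar.Y i, false⟩ : Lit (PhiVar n m)) ∈ E) :=
  exists_extension_claim_general Φ S
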